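/- Let θ ∈ {0,1/2}, and let ε be a complex number satisfying either Re ε > 0 and ε⁻¹ ∉ ℤ, or Re ε = 0 and Im ε > 0. Define h(r,m) = −m(1+εm)/(1+2ε(m+r)) and φ(m,n) = (1/24)(m³−m+(ε−ε⁻¹)m²)·δ_{m+n,0}. Suppose σ: (ℤ+θ)×(ℤ+θ) → ℂ satisfies σ(r,s) + σ(s,r) = (1/12)(4r²−1)δ_{r+s,0} and 2φ(r+s,m) = h(s,m)σ(r,m+s) + h(r,m)σ(s,m+r) for all m ∈ ℤ and r,s ∈ ℤ+θ. Then σ(s,−s) = (1/24)(4s²−1+2(ε−ε⁻¹)s) for every s ∈ ℤ+θ. -/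

import Mathlib

/-- membership in ℤ + θ -/
def InZT (θ x : ℂ) : Prop := ∃ k : ℤ, x = (k : ℂ) + θ

/-- h(r,m) = −m(1+εm)/(1+2ε(m+r)) -/
noncomputable def vh (ε r m : ℂ) : ℂ := -m * (1 + ε * m) / (1 + 2 * ε * (m + r))

/-- φ(m,n) = (1/24)(m³−m+(ε−ε⁻¹)m²)δ_{m+n,0} -/
noncomputable def vphi (ε m n : ℂ) : ℂ :=
  (1 / 24) * (m ^ 3 - m + (ε - ε⁻¹) * m ^ 2) * (if m + n = 0 then 1 else 0)

/-! Put r = s and m = -2s in (4.12). Since 1 + 2ε(m + s) = 1 - 2εs = 1 + εm is nonzero for the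
admissible ε, h(s, -2s) = 2s, so both terms on the right equal 2s·σ(s, -s) and we can divide by
4s; at s = 0 the relation degenerates and the symmetry relation (4.7) gives 2σ(0,0) = -1/12. -/

theorem InZT.exists_intCast_eq_two_mul {θ s : ℂ} (hθ : θ = 0 ∨ θ = 1 / 2) (hs : InZT θ s) :
    ∃ n : ℤ, (n : ℂ) = 2 * s := by
  obtain ⟨k, rfl⟩ := hs
  rcases hθ with rfl | rfl
  · exact ⟨2 * k, by push_cast; ring⟩
  · exact ⟨2 * k + 1, by push_cast; ring⟩

theorem one_add_mul_intCast_ne_zero {ε : ℂ}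
    (hε : (0 < ε.re ∧ ∀ k : ℤ, ε⁻¹ ≠ (k : ℂ)) ∨ (ε.re = 0 ∧ 0 < ε.im)) (k : ℤ) :
    1 + ε * k ≠ 0 := by
  intro h
  rcases hε with ⟨-, hinv⟩ | ⟨hre, -⟩
  · exact hinv (-k) (inv_eq_of_mul_eq_one_right (by push_cast; linear_combination -h))
  · simpa [hre] using congrArg Complex.re h

theorem vh_of_two_mul_add_eq_zero {ε r m : ℂ} (hrm : 2 * r + m = 0) (hm : 1 + ε * m ≠ 0) :
    vh ε r m = -m := by
  have hden : 1 + 2 * ε * (m + r) = 1 + ε * m := by linear_combination ε * hrm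
  rw [vh, hden, div_eq_iff hm]

theorem vphi_of_add_eq_zero {ε m n : ℂ} (hmn : m + n = 0) :
    vphi ε m n = (1 / 24) * (m ^ 3 - m + (ε - ε⁻¹) * m ^ 2) := by
  rw [vphi, if_pos hmn, mul_one]

/-- if σ satisfies the σ-part of equation (4.7) and equation (4.12)
of the paper with the explicit h and φ, then
σ(s,−s) = (1/24)(4s²−1+2(ε−ε⁻¹)s) for every s ∈ ℤ+θ. -/
theorem sigma_diagonal_value (θ ε : ℂ) (hθ : θ = 0 ∨ θ = 1 / 2)
    (hε : (0 < ε.re ∧ ∀ k : ℤ, ε⁻¹ ≠ (k : ℂ)) ∨ (ε.re = 0 ∧ 0 < ε.im))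
    (σ : ℂ → ℂ → ℂ)
    (hσ1 : ∀ r s : ℂ, InZT θ r → InZT θ s →
      σ r s + σ s r = (1 / 12) * (4 * r ^ 2 - 1) * (if r + s = 0 then 1 else 0))
    (hσ2 : ∀ (m : ℤ) (r s : ℂ), InZT θ r → InZT θ s →
      2 * vphi ε (r + s) m
        = vh ε s m * σ r ((m : ℂ) + s) + vh ε r m * σ s ((m : ℂ) + r)) :
    ∀ s : ℂ, InZT θ s →
      σ s (-s) = (1 / 24) * (4 * s ^ 2 - 1 + 2 * (ε - ε⁻¹) * s) := by
  intro s hs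
  by_cases hs0 : s = 0
  · subst hs0
    have h := hσ1 0 0 hs hs
    rw [if_pos (add_zero 0)] at h
    rw [neg_zero]
    linear_combination h / 2
  · obtain ⟨n, hn⟩ := hs.exists_intCast_eq_two_mul hθ
    have hdiag : 2 * s + ((-n : ℤ) : ℂ) = 0 := by push_cast; rw [hn]; ring
    have hvh : vh ε s (-n : ℤ) = 2 * s := by
      rw [vh_of_two_mul_add_eq_zero hdiag (one_add_mul_intCast_ne_zero hε _)]
      push_cast
      rw [hn, neg_neg]
    have hphi := vphi_of_add_eq_zero (ε := ε) (m := s + s) (n := (-n : ℤ))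
      (by linear_combination hdiag)
    have hshift : ((-n : ℤ) : ℂ) + s = -s := by linear_combination hdiag
    have key := hσ2 (-n) s s hs hs
    rw [hphi, hvh, hshift] at key
    apply mul_left_cancel₀ (by simpa using hs0 : (4 : ℂ) * s ≠ 0)
    linear_combination -key
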